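/- arXiv:1904.06999 — 2 statements merged into one kernel-verified Lean document; each statement's English description precedes it below -/
import Mathlib

section
/- Let G be a non-simple loop-free multigraph, minimal under admissible double edge swaps, with maximal non-simple edge {u1,u2}, u1 > u2, and let L be the set of large vertices. Then all vertices in L ∪ {u1,u2} are pairwise adjacent in G. -/
open Finset

/-- A loopy multigraph on vertex set `V`: each unordered pair (possibly a loop)
has a multiplicity. -/
abbrev Multigraph (V : Type*) := Sym2 V → ℕ

variable {V : Type*}

/-- The degree of a vertex: each incident edge counts with multiplicity,
and a loop counts twice. -/
def mdeg [Fintype V] (G : Multigraph V) (v : V) : ℕ :=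
  (∑ u : V, G s(v, u)) + G s(v, v)

/-- A multigraph is simple if it has no loops and every multiplicity is at most one. -/
def IsSimpleMG (G : Multigraph V) : Prop :=
  (∀ v : V, G s(v, v) = 0) ∧ ∀ e : Sym2 V, G e ≤ 1

/-- A multigraph is loop-free if it has no loops. -/
def LoopFree (G : Multigraph V) : Prop := ∀ v : V, G s(v, v) = 0

/-- A degree function is graphical if it is realized by some simple graph. -/
def GraphicalDeg [Fintype V] (d : V → ℕ) : Prop :=
  ∃ H : Multigraph V, IsSimpleMG H ∧ ∀ v : V, mdeg H v = d v

/-- The result of the double edge swap removing one copy each of `{v1,v2}` and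
`{v3,v4}` and adding one copy each of `{v2,v3}` and `{v4,v1}`. -/
def swapped [DecidableEq V] (G : Multigraph V) (v1 v2 v3 v4 : V) : Multigraph V :=
  fun e => G e - (if e = s(v1, v2) then 1 else 0) - (if e = s(v3, v4) then 1 else 0)
    + (if e = s(v2, v3) then 1 else 0) + (if e = s(v4, v1) then 1 else 0)

/-- The edges `{v1,v2}` and `{v3,v4}` share no vertex. -/
def NotIncident (v1 v2 v3 v4 : V) : Prop :=
  v1 ≠ v3 ∧ v1 ≠ v4 ∧ v2 ≠ v3 ∧ v2 ≠ v4

/-- One admissible double edge swap: the two removed edges exist, are not incident,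
and at least one of them is a loop or has multiplicity at least two. -/
def AdmissibleStep [DecidableEq V] (G G' : Multigraph V) : Prop :=
  ∃ v1 v2 v3 v4 : V, NotIncident v1 v2 v3 v4 ∧
    1 ≤ G s(v1, v2) ∧ 1 ≤ G s(v3, v4) ∧
    (v1 = v2 ∨ v3 = v4 ∨ 2 ≤ G s(v1, v2) ∨ 2 ≤ G s(v3, v4)) ∧
    G' = swapped G v1 v2 v3 v4

/-- The larger endpoint of an unordered pair. -/
def pmax [LinearOrder V] (p : Sym2 V) : V :=
  Sym2.lift ⟨fun a b => max a b, fun a b => max_comm a b⟩ p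

/-- The smaller endpoint of an unordered pair. -/
def pmin [LinearOrder V] (p : Sym2 V) : V :=
  Sym2.lift ⟨fun a b => min a b, fun a b => min_comm a b⟩ p

/-- Order on unordered pairs: compare larger endpoints, then smaller endpoints. -/
def PairLT [LinearOrder V] (p q : Sym2 V) : Prop :=
  pmax p < pmax q ∨ (pmax p = pmax q ∧ pmin p < pmin q)

def PairLE [LinearOrder V] (p q : Sym2 V) : Prop := p = q ∨ PairLT p q

/-- The pair `p` carries a non-simple edge of `G`: a multiple edge or a loop. -/
def NonSimpleAt (G : Multigraph V) (p : Sym2 V) : Prop :=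
  2 ≤ G p ∨ (p.IsDiag ∧ 1 ≤ G p)

/-- `p` is the maximal non-simple edge of `G`. -/
def MaxNonSimple [LinearOrder V] (G : Multigraph V) (p : Sym2 V) : Prop :=
  NonSimpleAt G p ∧ ∀ q : Sym2 V, NonSimpleAt G q → PairLE q p

/-- The strict partial order on multigraphs with fixed degrees: `G < H` iff `H` is
non-simple and its maximal non-simple edge is larger than all non-simple edges of `G`,
or the maximal non-simple edges agree but have strictly larger multiplicity in `H`. -/
def GraphLT [LinearOrder V] (G H : Multigraph V) : Prop :=
  ∃ p : Sym2 V, MaxNonSimple H p ∧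
    ((∀ q : Sym2 V, NonSimpleAt G q → PairLT q p) ∨ (MaxNonSimple G p ∧ G p < H p))

/-! ### Auxiliary lemmas -/

section Aux

variable [LinearOrder V]

lemma aux_pmax (x y : V) : pmax s(x, y) = max x y := rfl

lemma aux_pmin (x y : V) : pmin s(x, y) = min x y := rfl

lemma aux_sym2_ne {W : Type*} {a b c d : W} (h1 : a = c → b = d → False)
    (h2 : a = d → b = c → False) : s(a, b) ≠ s(c, d) := by
  intro h
  rcases Sym2.eq_iff.mp h with ⟨h, h'⟩ | ⟨h, h'⟩
  exacts [h1 h h', h2 h h']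

lemma aux_pairLT_low {u1 u2 x y : V} (hu : u2 < u1) (h1 : x < u1) (h2 : y < u1) :
    PairLT s(x, y) s(u1, u2) := by
  left
  rw [aux_pmax, aux_pmax, max_eq_left hu.le]
  exact max_lt h1 h2

lemma aux_pairLT_mid {u1 u2 y : V} (hu : u2 < u1) (h : y < u2) :
    PairLT s(y, u1) s(u1, u2) := by
  right
  constructor
  · rw [aux_pmax, aux_pmax, max_eq_left hu.le, max_eq_right (h.trans hu).le]
  · rw [aux_pmin, aux_pmin, min_eq_right hu.le, min_eq_left (h.trans hu).le]
    exact h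

lemma aux_two_le {G : Multigraph V} {u1 u2 : V} (hmax : MaxNonSimple G s(u1, u2))
    (hu : u2 < u1) : 2 ≤ G s(u1, u2) := by
  rcases hmax.1 with h | ⟨hd, _⟩
  · exact h
  · rw [Sym2.mk_isDiag_iff] at hd
    exact absurd hd hu.ne'

lemma aux_mult_le_one {G : Multigraph V} {u1 u2 : V} (hmax : MaxNonSimple G s(u1, u2))
    (hu : u2 < u1) {v w : V} (hv : u1 < v ∨ u1 < w) : G s(v, w) ≤ 1 := by
  by_contra h
  push_neg at h
  have hns : NonSimpleAt G s(v, w) := Or.inl h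
  have hmx : u1 < max v w := by
    rcases hv with h' | h'
    · exact h'.trans_le (le_max_left _ _)
    · exact h'.trans_le (le_max_right _ _)
  rcases hmax.2 _ hns with he | hlt | ⟨heq, _⟩
  · have := congrArg pmax he
    rw [aux_pmax, aux_pmax, max_eq_left hu.le] at this
    exact absurd this hmx.ne'
  · rw [aux_pmax, aux_pmax, max_eq_left hu.le] at hlt
    exact absurd hlt hmx.asymm
  · rw [aux_pmax, aux_pmax, max_eq_left hu.le] at heq
    exact absurd heq hmx.ne'

lemma aux_graphLT {G G' : Multigraph V} {u1 u2 : V} (hmax : MaxNonSimple G s(u1, u2))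
    (h1 : G' s(u1, u2) < G s(u1, u2))
    (h2 : ∀ q, NonSimpleAt G' q → q = s(u1, u2) ∨ PairLT q s(u1, u2)) :
    GraphLT G' G := by
  refine ⟨s(u1, u2), hmax, ?_⟩
  by_cases hc : NonSimpleAt G' s(u1, u2)
  · exact Or.inr ⟨⟨hc, fun q hq => h2 q hq⟩, h1⟩
  · exact Or.inl fun q hq => (h2 q hq).elim (fun he => absurd (he ▸ hq) hc) id

lemma aux_not_nonsimple {G' : Multigraph V} {y z : V} (hyz : y ≠ z)
    (hval : G' s(y, z) ≤ 1) : ¬ NonSimpleAt G' s(y, z) := by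
  rintro (h | ⟨hd, _⟩)
  · omega
  · exact hyz (Sym2.mk_isDiag_iff.mp hd)

variable [Fintype V]

lemma aux_mdeg_mono {G : Multigraph V} (hord : ∀ u v : V, mdeg G u < mdeg G v → u < v)
    {v w : V} (h : v ≤ w) : mdeg G v ≤ mdeg G w := by
  by_contra h'
  push_neg at h'
  exact absurd (hord w v h') (not_lt.mpr h)

lemma aux_deg_le_card {G : Multigraph V} {u1 u2 : V} (hlf : LoopFree G)
    (hmax : MaxNonSimple G s(u1, u2)) (hu : u2 < u1) {v : V} (hv : u1 < v) :
    mdeg G v ≤ (univ.filter fun w => 1 ≤ G s(v, w)).card := by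
  unfold mdeg
  rw [hlf v, add_zero]
  calc ∑ w, G s(v, w) = ∑ w ∈ univ.filter fun w => 1 ≤ G s(v, w), G s(v, w) :=
        (Finset.sum_filter_of_ne (fun w _ h => by omega)).symm
    _ ≤ ∑ _w ∈ univ.filter fun w => 1 ≤ G s(v, w), 1 :=
        Finset.sum_le_sum (fun w _ => aux_mult_le_one hmax hu (Or.inl hv))
    _ = (univ.filter fun w => 1 ≤ G s(v, w)).card := by simp

/-- The single-swap consequence of minimality: for any edge `{c,d}` disjoint from
`{u1,u2}`, either `c` is large and adjacent to `u2`, or `d > u2` and `d` is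
adjacent to `u1`. -/
lemma aux_star {G : Multigraph V} {u1 u2 : V} (hlf : LoopFree G)
    (hmin : ∀ G' : Multigraph V, Relation.ReflTransGen AdmissibleStep G G' → ¬ GraphLT G' G)
    (hmax : MaxNonSimple G s(u1, u2)) (hu : u2 < u1)
    {c d : V} (hc1 : c ≠ u1) (hc2 : c ≠ u2) (hd1 : d ≠ u1) (hd2 : d ≠ u2)
    (hcd : 1 ≤ G s(c, d)) :
    (u1 < c ∧ 1 ≤ G s(u2, c)) ∨ (u2 < d ∧ 1 ≤ G s(u1, d)) := by
  have hm : 2 ≤ G s(u1, u2) := aux_two_le hmax hu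
  by_contra hcon
  push_neg at hcon
  obtain ⟨hA, hB⟩ := hcon
  have hAc : c < u1 ∨ G s(u2, c) = 0 := by
    rcases lt_or_gt_of_ne hc1 with h | h
    · exact Or.inl h
    · have := hA h; right; omega
  have hBd : d < u2 ∨ G s(u1, d) = 0 := by
    rcases lt_or_gt_of_ne hd2 with h | h
    · exact Or.inl h
    · have := hB h; right; omega
  have hcd' : c ≠ d := by
    rintro rfl
    rw [hlf c] at hcd
    omega
  -- assorted inequalities
  have n1 : u1 ≠ u2 := hu.ne'
  have n2 : u2 ≠ u1 := hu.ne
  have n3 : u1 ≠ c := hc1.symm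
  have n4 : u1 ≠ d := hd1.symm
  have n5 : u2 ≠ c := hc2.symm
  have n6 : u2 ≠ d := hd2.symm
  have n7 : d ≠ c := hcd'.symm
  -- pair distinctness
  have p12 : s(u1, u2) ≠ s(c, d) := by simp [Sym2.eq_iff, n3, n4]
  have p13 : s(u1, u2) ≠ s(u2, c) := by simp [Sym2.eq_iff, n1, n3]
  have p14 : s(u1, u2) ≠ s(d, u1) := by simp [Sym2.eq_iff, n1, n4, n6]
  have p23 : s(c, d) ≠ s(u2, c) := by simp [Sym2.eq_iff, hc2, hd2]
  have p24 : s(c, d) ≠ s(d, u1) := by simp [Sym2.eq_iff, hcd', hc1]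
  have p34 : s(u2, c) ≠ s(d, u1) := by simp [Sym2.eq_iff, n6, n2]
  refine hmin (swapped G u1 u2 c d)
    (Relation.ReflTransGen.single
      ⟨u1, u2, c, d, ⟨n3, n4, n5, n6⟩, by omega, hcd,
        Or.inr (Or.inr (Or.inl hm)), rfl⟩) ?_
  have e1 : swapped G u1 u2 c d s(u1, u2) = G s(u1, u2) - 1 := by
    simp [swapped, p12, p13, p14]
  refine aux_graphLT hmax (by omega) ?_
  intro q hq
  by_cases hq1 : q = s(u1, u2)
  · exact Or.inl hq1
  by_cases hq2 : q = s(c, d)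
  · subst hq2
    have ev : swapped G u1 u2 c d s(c, d) = G s(c, d) - 1 := by
      simp [swapped, p12.symm, p23, p24]
    have h2 : 2 ≤ G s(c, d) := by
      rcases hq with h | ⟨hd', _⟩
      · omega
      · exact absurd (Sym2.mk_isDiag_iff.mp hd') hcd'
    rcases hmax.2 _ (Or.inl h2) with he | hlt
    · exact absurd he p12.symm
    · exact Or.inr hlt
  by_cases hq3 : q = s(u2, c)
  · subst hq3
    rcases hAc with h | h
    · exact Or.inr (aux_pairLT_low hu hu h)
    · have ev : swapped G u1 u2 c d s(u2, c) = 1 := by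
        simp [swapped, p13.symm, p23.symm, p34, h]
      exact absurd hq (aux_not_nonsimple n5 (by omega))
  by_cases hq4 : q = s(d, u1)
  · subst hq4
    rcases hBd with h | h
    · exact Or.inr (aux_pairLT_mid hu h)
    · have h' : G s(d, u1) = 0 := by rw [Sym2.eq_swap]; exact h
      have ev : swapped G u1 u2 c d s(d, u1) = 1 := by
        simp [swapped, p14.symm, p24.symm, p34.symm, h']
      exact absurd hq (aux_not_nonsimple hd1 (by omega))
  · have ev : swapped G u1 u2 c d q = G q := by
      simp [swapped, hq1, hq2, hq3, hq4]
    simp only [NonSimpleAt, ev] at hq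
    exact hmax.2 q hq

/-- Every large vertex is adjacent to `u1`. -/
lemma aux_adj_u1 {G : Multigraph V} {u1 u2 : V} (hlf : LoopFree G)
    (hord : ∀ u v : V, mdeg G u < mdeg G v → u < v)
    (hmin : ∀ G' : Multigraph V, Relation.ReflTransGen AdmissibleStep G G' → ¬ GraphLT G' G)
    (hmax : MaxNonSimple G s(u1, u2)) (hu : u2 < u1)
    {v : V} (hv : u1 < v) : 1 ≤ G s(u1, v) := by
  by_contra hA
  push_neg at hA
  have hA0 : G s(u1, v) = 0 := by omega
  have hm : 2 ≤ G s(u1, u2) := aux_two_le hmax hu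
  classical
  set N := univ.filter (fun w => 1 ≤ G s(v, w)) with hN
  have hdv : mdeg G v ≤ N.card := aux_deg_le_card hlf hmax hu hv
  have hu1N : u1 ∉ N := by
    simp only [hN, Finset.mem_filter]
    rintro ⟨-, h⟩
    rw [Sym2.eq_swap] at h
    omega
  have key : ∀ w ∈ N.erase u2, 1 ≤ G s(u2, w) := by
    intro w hw
    have hw2 : w ≠ u2 := (Finset.mem_erase.mp hw).1
    have hwN : 1 ≤ G s(v, w) :=
      (Finset.mem_filter.mp (Finset.mem_erase.mp hw).2).2
    have hw1 : w ≠ u1 := by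
      rintro rfl
      exact hu1N (Finset.mem_erase.mp hw).2
    have := aux_star hlf hmin hmax hu hw1 hw2 (ne_of_gt hv) (ne_of_gt (hu.trans hv))
      (by rw [Sym2.eq_swap]; exact hwN)
    rcases this with ⟨_, h⟩ | ⟨_, h⟩
    · exact h
    · omega
  have hu1e : u1 ∉ N.erase u2 := fun h => hu1N (Finset.mem_erase.mp h).2
  have hdu2 : (N.erase u2).card + 2 ≤ mdeg G u2 := by
    have h1 : (N.erase u2).card • 1 ≤ ∑ w ∈ N.erase u2, G s(u2, w) :=
      Finset.card_nsmul_le_sum _ _ _ key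
    rw [smul_eq_mul, mul_one] at h1
    have h2 : 2 ≤ G s(u2, u1) := by rw [Sym2.eq_swap]; exact hm
    calc (N.erase u2).card + 2 ≤ G s(u2, u1) + ∑ w ∈ N.erase u2, G s(u2, w) := by omega
      _ = ∑ w ∈ insert u1 (N.erase u2), G s(u2, w) := by rw [Finset.sum_insert hu1e]
      _ ≤ ∑ w, G s(u2, w) := Finset.sum_le_sum_of_subset (Finset.subset_univ _)
      _ ≤ mdeg G u2 := Nat.le_add_right _ _
  have hmono1 : mdeg G u2 ≤ mdeg G u1 := aux_mdeg_mono hord hu.le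
  have hmono2 : mdeg G u1 ≤ mdeg G v := aux_mdeg_mono hord hv.le
  have hcard : N.card - 1 ≤ (N.erase u2).card := Finset.pred_card_le_card_erase
  have hNe : u2 ∈ N ∨ u2 ∉ N := em _
  have hce : (N.erase u2).card ≤ N.card := Finset.card_le_card (Finset.erase_subset _ _)
  omega

/-- Every large vertex is adjacent to `u2`. -/
lemma aux_adj_u2 {G : Multigraph V} {u1 u2 : V} (hlf : LoopFree G)
    (hord : ∀ u v : V, mdeg G u < mdeg G v → u < v)
    (hmin : ∀ G' : Multigraph V, Relation.ReflTransGen AdmissibleStep G G' → ¬ GraphLT G' G)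
    (hmax : MaxNonSimple G s(u1, u2)) (hu : u2 < u1)
    {v : V} (hv : u1 < v) : 1 ≤ G s(u2, v) := by
  by_contra hB
  push_neg at hB
  have hB0 : G s(u2, v) = 0 := by omega
  have hm : 2 ≤ G s(u1, u2) := aux_two_le hmax hu
  have hA : 1 ≤ G s(u1, v) := aux_adj_u1 hlf hord hmin hmax hu hv
  classical
  set N := univ.filter (fun w => 1 ≤ G s(v, w)) with hN
  have hdv : mdeg G v ≤ N.card := aux_deg_le_card hlf hmax hu hv
  have hu2N : u2 ∉ N := by
    simp only [hN, Finset.mem_filter]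
    rintro ⟨-, h⟩
    rw [Sym2.eq_swap] at h
    omega
  have hvN : v ∉ N := by
    simp only [hN, Finset.mem_filter]
    rintro ⟨-, h⟩
    rw [hlf v] at h
    omega
  have key : ∀ w ∈ N.erase u1, 1 ≤ G s(u1, w) := by
    intro w hw
    have hw1 : w ≠ u1 := (Finset.mem_erase.mp hw).1
    have hwN : 1 ≤ G s(v, w) :=
      (Finset.mem_filter.mp (Finset.mem_erase.mp hw).2).2
    have hw2 : w ≠ u2 := by
      rintro rfl
      exact hu2N (Finset.mem_erase.mp hw).2
    have := aux_star hlf hmin hmax hu (ne_of_gt hv) (ne_of_gt (hu.trans hv)) hw1 hw2 hwN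
    rcases this with ⟨_, h⟩ | ⟨_, h⟩
    · omega
    · exact h
  have hvE : v ∉ N.erase u1 := fun h => hvN (Finset.mem_erase.mp h).2
  have hu2E : u2 ∉ insert v (N.erase u1) := by
    rw [Finset.mem_insert]
    rintro (h | h)
    · exact absurd h (hu.trans hv).ne
    · exact hu2N (Finset.mem_erase.mp h).2
  have h1 : (N.erase u1).card • 1 ≤ ∑ w ∈ N.erase u1, G s(u1, w) :=
    Finset.card_nsmul_le_sum _ _ _ key
  rw [smul_eq_mul, mul_one] at h1
  have hdu1 : (N.erase u1).card + 3 ≤ mdeg G u1 := by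
    calc (N.erase u1).card + 3
        ≤ G s(u1, u2) + (G s(u1, v) + ∑ w ∈ N.erase u1, G s(u1, w)) := by omega
      _ = ∑ w ∈ insert u2 (insert v (N.erase u1)), G s(u1, w) := by
          rw [Finset.sum_insert hu2E, Finset.sum_insert hvE]
      _ ≤ ∑ w, G s(u1, w) := Finset.sum_le_sum_of_subset (Finset.subset_univ _)
      _ ≤ mdeg G u1 := Nat.le_add_right _ _
  have hmono : mdeg G u1 ≤ mdeg G v := aux_mdeg_mono hord hv.le
  have hcard : N.card - 1 ≤ (N.erase u1).card := Finset.pred_card_le_card_erase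
  have hce : (N.erase u1).card ≤ N.card := Finset.card_le_card (Finset.erase_subset _ _)
  omega

/-- The two-step swap contradiction in the main case. -/
lemma aux_twostep {G : Multigraph V} {u1 u2 : V} (hlf : LoopFree G)
    (hmin : ∀ G' : Multigraph V, Relation.ReflTransGen AdmissibleStep G G' → ¬ GraphLT G' G)
    (hmax : MaxNonSimple G s(u1, u2)) (hu : u2 < u1)
    {a b x d : V} (ha : u1 < a) (hb : u1 < b) (hab : a ≠ b)
    (hA : 1 ≤ G s(u1, b)) (h0 : G s(a, b) = 0)
    (hxb : 1 ≤ G s(b, x)) (hxlt : x < u1) (hx2 : x ≠ u2)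
    (had : 1 ≤ G s(a, d)) (hdlt : d < u1) (hd2 : d ≠ u2)
    (hdcond : d < u2 ∨ G s(u1, d) = 0) : False := by
  have hm : 2 ≤ G s(u1, u2) := aux_two_le hmax hu
  have n_u1u2 : u1 ≠ u2 := hu.ne'
  have n_u2u1 : u2 ≠ u1 := hu.ne
  have n_bu1 : b ≠ u1 := hb.ne'
  have n_u1b : u1 ≠ b := hb.ne
  have n_bu2 : b ≠ u2 := (hu.trans hb).ne'
  have n_u2b : u2 ≠ b := (hu.trans hb).ne
  have n_au1 : a ≠ u1 := ha.ne'
  have n_u1a : u1 ≠ a := ha.ne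
  have n_au2 : a ≠ u2 := (hu.trans ha).ne'
  have n_u2a : u2 ≠ a := (hu.trans ha).ne
  have n_ab : a ≠ b := hab
  have n_ba : b ≠ a := hab.symm
  have n_xu1 : x ≠ u1 := hxlt.ne
  have n_u1x : u1 ≠ x := hxlt.ne'
  have n_xu2 : x ≠ u2 := hx2
  have n_u2x : u2 ≠ x := hx2.symm
  have n_xb : x ≠ b := (hxlt.trans hb).ne
  have n_bx : b ≠ x := (hxlt.trans hb).ne'
  have n_xa : x ≠ a := (hxlt.trans ha).ne
  have n_ax : a ≠ x := (hxlt.trans ha).ne'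
  have n_du1 : d ≠ u1 := hdlt.ne
  have n_u1d : u1 ≠ d := hdlt.ne'
  have n_du2 : d ≠ u2 := hd2
  have n_u2d : u2 ≠ d := hd2.symm
  have n_db : d ≠ b := (hdlt.trans hb).ne
  have n_bd : b ≠ d := (hdlt.trans hb).ne'
  have n_da : d ≠ a := (hdlt.trans ha).ne
  have n_ad : a ≠ d := (hdlt.trans ha).ne'
  -- values after the first swap
  have hc1v : swapped G u2 u1 b x s(u1, b) = G s(u1, b) + 1 := by
    simp [swapped, Sym2.eq_iff, n_u1u2, n_u2u1, n_bu1, n_u1b, n_bu2, n_u2b, n_xu1, n_u1x,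
      n_xu2, n_u2x, n_xb, n_bx]
  have hc2v : swapped G u2 u1 b x s(a, d) = G s(a, d) := by
    simp [swapped, Sym2.eq_iff, n_au1, n_u1a, n_au2, n_u2a, n_ab, n_ba, n_ax, n_xa,
      n_du1, n_u1d, n_du2, n_u2d, n_db, n_bd, n_da, n_ad]
  -- the two-step path
  have hstep1 : AdmissibleStep G (swapped G u2 u1 b x) :=
    ⟨u2, u1, b, x, ⟨n_u2b, n_u2x, n_u1b, n_u1x⟩,
      by rw [Sym2.eq_swap]; omega, hxb,
      Or.inr (Or.inr (Or.inl (by rw [Sym2.eq_swap]; omega))), rfl⟩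
  have hstep2 : AdmissibleStep (swapped G u2 u1 b x)
      (swapped (swapped G u2 u1 b x) u1 b a d) :=
    ⟨u1, b, a, d, ⟨n_u1a, n_u1d, n_ba, n_bd⟩,
      by rw [hc1v]; omega, by rw [hc2v]; omega,
      Or.inr (Or.inr (Or.inl (by rw [hc1v]; omega))), rfl⟩
  have hpath : Relation.ReflTransGen AdmissibleStep G
      (swapped (swapped G u2 u1 b x) u1 b a d) :=
    Relation.ReflTransGen.head hstep1 (Relation.ReflTransGen.single hstep2)
  -- values after the second swap
  have he1 : swapped (swapped G u2 u1 b x) u1 b a d s(u1, u2) = G s(u1, u2) - 1 := by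
    simp [swapped, Sym2.eq_iff, n_u1u2, n_u2u1, n_bu1, n_u1b, n_bu2, n_u2b, n_au1, n_u1a,
      n_au2, n_u2a, n_ab, n_ba, n_xu1, n_u1x, n_xu2, n_u2x, n_xb, n_bx, n_xa, n_ax,
      n_du1, n_u1d, n_du2, n_u2d, n_db, n_bd, n_da, n_ad]
  have he2 : swapped (swapped G u2 u1 b x) u1 b a d s(b, x) = G s(b, x) - 1 := by
    simp [swapped, Sym2.eq_iff, n_u1u2, n_u2u1, n_bu1, n_u1b, n_bu2, n_u2b, n_au1, n_u1a,
      n_au2, n_u2a, n_ab, n_ba, n_xu1, n_u1x, n_xu2, n_u2x, n_xb, n_bx, n_xa, n_ax,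
      n_du1, n_u1d, n_du2, n_u2d, n_db, n_bd, n_da, n_ad]
  have he3 : swapped (swapped G u2 u1 b x) u1 b a d s(u1, b) = G s(u1, b) := by
    simp [swapped, Sym2.eq_iff, n_u1u2, n_u2u1, n_bu1, n_u1b, n_bu2, n_u2b, n_au1, n_u1a,
      n_au2, n_u2a, n_ab, n_ba, n_xu1, n_u1x, n_xu2, n_u2x, n_xb, n_bx, n_xa, n_ax,
      n_du1, n_u1d, n_du2, n_u2d, n_db, n_bd, n_da, n_ad]
  have he4 : swapped (swapped G u2 u1 b x) u1 b a d s(a, d) = G s(a, d) - 1 := by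
    simp [swapped, Sym2.eq_iff, n_u1u2, n_u2u1, n_bu1, n_u1b, n_bu2, n_u2b, n_au1, n_u1a,
      n_au2, n_u2a, n_ab, n_ba, n_xu1, n_u1x, n_xu2, n_u2x, n_xb, n_bx, n_xa, n_ax,
      n_du1, n_u1d, n_du2, n_u2d, n_db, n_bd, n_da, n_ad]
  have he5 : swapped (swapped G u2 u1 b x) u1 b a d s(a, b) = 1 := by
    simp [swapped, Sym2.eq_iff, n_u1u2, n_u2u1, n_bu1, n_u1b, n_bu2, n_u2b, n_au1, n_u1a,
      n_au2, n_u2a, n_ab, n_ba, n_xu1, n_u1x, n_xu2, n_u2x, n_xb, n_bx, n_xa, n_ax,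
      n_du1, n_u1d, n_du2, n_u2d, n_db, n_bd, n_da, n_ad, h0]
  have he6 : swapped (swapped G u2 u1 b x) u1 b a d s(d, u1) = G s(d, u1) + 1 := by
    simp [swapped, Sym2.eq_iff, n_u1u2, n_u2u1, n_bu1, n_u1b, n_bu2, n_u2b, n_au1, n_u1a,
      n_au2, n_u2a, n_ab, n_ba, n_xu1, n_u1x, n_xu2, n_u2x, n_xb, n_bx, n_xa, n_ax,
      n_du1, n_u1d, n_du2, n_u2d, n_db, n_bd, n_da, n_ad]
  apply hmin _ hpath
  refine aux_graphLT hmax (by rw [he1]; omega) ?_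
  intro q hq
  by_cases hq1 : q = s(u1, u2)
  · exact Or.inl hq1
  by_cases hq2 : q = s(x, u2)
  · exact Or.inr (hq2 ▸ aux_pairLT_low hu hxlt hu)
  by_cases hq3 : q = s(b, x)
  · subst hq3
    have hle : G s(b, x) ≤ 1 := aux_mult_le_one hmax hu (Or.inl hb)
    exact absurd hq (aux_not_nonsimple n_bx (by rw [he2]; omega))
  by_cases hq4 : q = s(u1, b)
  · subst hq4
    have hle : G s(u1, b) ≤ 1 := aux_mult_le_one hmax hu (Or.inr hb)
    exact absurd hq (aux_not_nonsimple n_u1b (by rw [he3]; omega))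
  by_cases hq5 : q = s(a, d)
  · subst hq5
    have hle : G s(a, d) ≤ 1 := aux_mult_le_one hmax hu (Or.inl ha)
    exact absurd hq (aux_not_nonsimple n_ad (by rw [he4]; omega))
  by_cases hq6 : q = s(a, b)
  · subst hq6
    exact absurd hq (aux_not_nonsimple n_ab he5.le)
  by_cases hq7 : q = s(d, u1)
  · subst hq7
    rcases hdcond with h | h
    · exact Or.inr (aux_pairLT_mid hu h)
    · have h' : G s(d, u1) = 0 := by rw [Sym2.eq_swap]; exact h
      exact absurd hq (aux_not_nonsimple n_du1 (by rw [he6, h']))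
  · have hq2' : q ≠ s(u2, u1) := by rw [Sym2.eq_swap]; exact hq1
    have hq6' : q ≠ s(b, a) := by rw [Sym2.eq_swap]; exact hq6
    have ev : swapped (swapped G u2 u1 b x) u1 b a d q = G q := by
      simp [swapped, hq2', hq3, hq4, hq2, hq5, hq6', hq7]
    simp only [NonSimpleAt, ev] at hq
    exact hmax.2 q hq

/-- Two distinct large vertices are adjacent. -/
lemma aux_both_large {G : Multigraph V} {u1 u2 : V} (hlf : LoopFree G)
    (hord : ∀ u v : V, mdeg G u < mdeg G v → u < v)
    (hmin : ∀ G' : Multigraph V, Relation.ReflTransGen AdmissibleStep G G' → ¬ GraphLT G' G)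
    (hmax : MaxNonSimple G s(u1, u2)) (hu : u2 < u1)
    {a b : V} (ha : u1 < a) (hb : u1 < b) (hab : a ≠ b) (h0 : G s(a, b) = 0) :
    False := by
  classical
  have hm : 2 ≤ G s(u1, u2) := aux_two_le hmax hu
  set L := univ.filter (fun v => u1 < v) with hL
  set Bad := univ.filter (fun w => w < u1 ∧ u2 < w ∧ 1 ≤ G s(u1, w)) with hBad
  have hdisj : Disjoint L Bad := by
    rw [Finset.disjoint_left]
    intro w hwL hwB
    have h1 := (Finset.mem_filter.mp hwL).2
    have h2 := (Finset.mem_filter.mp hwB).2.1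
    exact absurd h1 h2.asymm
  have hu2LB : u2 ∉ L ∪ Bad := by
    rw [Finset.mem_union]
    rintro (h | h)
    · exact absurd (Finset.mem_filter.mp h).2 hu.asymm
    · exact absurd (Finset.mem_filter.mp h).2.2.1 (lt_irrefl u2)
  have hLB : ∀ w ∈ L ∪ Bad, 1 ≤ G s(u1, w) := by
    intro w hw
    rcases Finset.mem_union.mp hw with h | h
    · exact aux_adj_u1 hlf hord hmin hmax hu (Finset.mem_filter.mp h).2
    · exact (Finset.mem_filter.mp h).2.2.2
  have hlow : 2 + L.card + Bad.card ≤ mdeg G u1 := by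
    have h1 : (L ∪ Bad).card • 1 ≤ ∑ w ∈ L ∪ Bad, G s(u1, w) :=
      Finset.card_nsmul_le_sum _ _ _ hLB
    rw [smul_eq_mul, mul_one, Finset.card_union_of_disjoint hdisj] at h1
    calc 2 + L.card + Bad.card ≤ G s(u1, u2) + ∑ w ∈ L ∪ Bad, G s(u1, w) := by omega
      _ = ∑ w ∈ insert u2 (L ∪ Bad), G s(u1, w) := by rw [Finset.sum_insert hu2LB]
      _ ≤ ∑ w, G s(u1, w) := Finset.sum_le_sum_of_subset (Finset.subset_univ _)
      _ ≤ mdeg G u1 := Nat.le_add_right _ _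
  have hmonb : mdeg G u1 ≤ mdeg G b := aux_mdeg_mono hord hb.le
  have hmona : mdeg G u1 ≤ mdeg G a := aux_mdeg_mono hord ha.le
  obtain ⟨x, hxb, hxu1, hxu2, hxlt⟩ :
      ∃ x, 1 ≤ G s(b, x) ∧ x ≠ u1 ∧ x ≠ u2 ∧ x < u1 := by
    by_contra hno
    push_neg at hno
    set T := univ.filter (fun w => 1 ≤ G s(b, w)) with hT
    have hdb : mdeg G b ≤ T.card := aux_deg_le_card hlf hmax hu hb
    have hsub : T ⊆ ((insert u1 (insert u2 L)).erase a).erase b := by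
      intro w hw
      have hw1 : 1 ≤ G s(b, w) := (Finset.mem_filter.mp hw).2
      have hwb : w ≠ b := by intro he; rw [he, hlf b] at hw1; omega
      have hwa : w ≠ a := by
        intro he
        rw [he, Sym2.eq_swap] at hw1
        omega
      rw [Finset.mem_erase, Finset.mem_erase, Finset.mem_insert, Finset.mem_insert]
      refine ⟨hwb, hwa, ?_⟩
      by_cases hwu1 : w = u1
      · exact Or.inl hwu1
      by_cases hwu2 : w = u2
      · exact Or.inr (Or.inl hwu2)
      refine Or.inr (Or.inr ?_)
      rw [hL, Finset.mem_filter]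
      refine ⟨Finset.mem_univ _, ?_⟩
      rcases lt_or_gt_of_ne hwu1 with h | h
      · exact absurd (hno w hw1 hwu1 hwu2) (not_le.mpr h)
      · exact h
    have hbm : b ∈ (insert u1 (insert u2 L)).erase a := by
      rw [Finset.mem_erase, Finset.mem_insert, Finset.mem_insert]
      exact ⟨hab.symm, Or.inr (Or.inr (by
        rw [hL, Finset.mem_filter]; exact ⟨Finset.mem_univ _, hb⟩))⟩
    have ham : a ∈ insert u1 (insert u2 L) := by
      rw [Finset.mem_insert, Finset.mem_insert]
      exact Or.inr (Or.inr (by rw [hL, Finset.mem_filter]; exact ⟨Finset.mem_univ _, ha⟩))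
    have hc1 := Finset.card_le_card hsub
    rw [Finset.card_erase_of_mem hbm, Finset.card_erase_of_mem ham] at hc1
    have hi1 := Finset.card_insert_le u1 (insert u2 L)
    have hi2 := Finset.card_insert_le u2 L
    omega
  obtain ⟨d, had, hdu1, hdu2, hdlt, hdcond⟩ :
      ∃ d, 1 ≤ G s(a, d) ∧ d ≠ u1 ∧ d ≠ u2 ∧ d < u1 ∧ (d < u2 ∨ G s(u1, d) = 0) := by
    by_contra hno
    push_neg at hno
    set T := univ.filter (fun w => 1 ≤ G s(a, w)) with hT
    have hda : mdeg G a ≤ T.card := aux_deg_le_card hlf hmax hu ha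
    have hsub : T ⊆ ((insert u1 (insert u2 (L ∪ Bad))).erase a).erase b := by
      intro w hw
      have hw1 : 1 ≤ G s(a, w) := (Finset.mem_filter.mp hw).2
      have hwa : w ≠ a := by intro he; rw [he, hlf a] at hw1; omega
      have hwb : w ≠ b := by intro he; rw [he] at hw1; omega
      rw [Finset.mem_erase, Finset.mem_erase, Finset.mem_insert, Finset.mem_insert]
      refine ⟨hwb, hwa, ?_⟩
      by_cases hwu1 : w = u1
      · exact Or.inl hwu1
      by_cases hwu2 : w = u2
      · exact Or.inr (Or.inl hwu2)
      refine Or.inr (Or.inr ?_)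
      rw [Finset.mem_union]
      rcases lt_or_gt_of_ne hwu1 with h | h
      · obtain ⟨h1, h2⟩ := hno w hw1 hwu1 hwu2 h
        right
        rw [hBad, Finset.mem_filter]
        exact ⟨Finset.mem_univ _,
          h, lt_of_le_of_ne h1 (Ne.symm hwu2), by omega⟩
      · left
        rw [hL, Finset.mem_filter]
        exact ⟨Finset.mem_univ _, h⟩
    have hbm : b ∈ (insert u1 (insert u2 (L ∪ Bad))).erase a := by
      rw [Finset.mem_erase, Finset.mem_insert, Finset.mem_insert, Finset.mem_union]
      exact ⟨hab.symm, Or.inr (Or.inr (Or.inl (by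
        rw [hL, Finset.mem_filter]; exact ⟨Finset.mem_univ _, hb⟩)))⟩
    have ham : a ∈ insert u1 (insert u2 (L ∪ Bad)) := by
      rw [Finset.mem_insert, Finset.mem_insert, Finset.mem_union]
      exact Or.inr (Or.inr (Or.inl (by
        rw [hL, Finset.mem_filter]; exact ⟨Finset.mem_univ _, ha⟩)))
    have hc1 := Finset.card_le_card hsub
    rw [Finset.card_erase_of_mem hbm, Finset.card_erase_of_mem ham] at hc1
    have hcu : (L ∪ Bad).card = L.card + Bad.card := Finset.card_union_of_disjoint hdisj
    have hi1 := Finset.card_insert_le u1 (insert u2 (L ∪ Bad))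
    have hi2 := Finset.card_insert_le u2 (L ∪ Bad)
    omega
  exact aux_twostep hlf hmin hmax hu ha hb hab
    (aux_adj_u1 hlf hord hmin hmax hu hb) h0 hxb hxlt hxu2 had hdlt hdu2 hdcond

end Aux

/-- Lemma on large vertices: all vertices in L ∪ {u1, u2}, where L is
the set of large vertices, are pairwise adjacent. -/
theorem large_and_u1_u2_pairwise_adjacent [Fintype V] [LinearOrder V]
    (G : Multigraph V) (hlf : LoopFree G)
    (hord : ∀ u v : V, mdeg G u < mdeg G v → u < v)
    (hmin : ∀ G' : Multigraph V, Relation.ReflTransGen AdmissibleStep G G' → ¬ GraphLT G' G)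
    (u1 u2 : V) (hmax : MaxNonSimple G s(u1, u2)) (hu : u2 < u1)
    (a b : V) (haL : u1 < a ∨ a = u1 ∨ a = u2) (hbL : u1 < b ∨ b = u1 ∨ b = u2)
    (hab : a ≠ b) :
    1 ≤ G s(a, b) := by
  have hm : 2 ≤ G s(u1, u2) := aux_two_le hmax hu
  rcases haL with ha | rfl | rfl
  · rcases hbL with hb | rfl | rfl
    · by_contra h
      push_neg at h
      exact aux_both_large hlf hord hmin hmax hu ha hb hab (by omega)
    · rw [Sym2.eq_swap]
      exact aux_adj_u1 hlf hord hmin hmax hu ha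
    · rw [Sym2.eq_swap]
      exact aux_adj_u2 hlf hord hmin hmax hu ha
  · rcases hbL with hb | rfl | rfl
    · exact aux_adj_u1 hlf hord hmin hmax hu hb
    · exact absurd rfl hab
    · omega
  · rcases hbL with hb | rfl | rfl
    · exact aux_adj_u2 hlf hord hmin hmax hu hb
    · rw [Sym2.eq_swap]
      omega
    · exact absurd rfl hab
end

section
/- Let G be a non-simple loop-free multigraph, minimal under admissible double edge swaps, with maximal non-simple edge {u1,u2}, u1 > u2. Then every small vertex that is not adjacent to any small vertex is smaller than u2. -/
open Finset

variable {V : Type*}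

lemma pmax_mk [LinearOrder V] (z w : V) : pmax s(z,w) = max z w := rfl
lemma pmin_mk [LinearOrder V] (z w : V) : pmin s(z,w) = min z w := rfl

lemma key_swap [Fintype V] [LinearOrder V] (G : Multigraph V) (hlf : LoopFree G)
    (hmin : ∀ G' : Multigraph V, Relation.ReflTransGen AdmissibleStep G G' → ¬ GraphLT G' G)
    (u1 u2 : V) (hmax : MaxNonSimple G s(u1, u2)) (hu : u2 < u1)
    (x y : V) (hx1 : x ≠ u1) (hx2 : x ≠ u2) (hy1 : y ≠ u1) (hy2 : y ≠ u2)
    (hxy : 1 ≤ G s(x, y))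
    (hX : x < u1 ∨ G s(u2, x) = 0) (hY : y < u2 ∨ G s(u1, y) = 0) : False := by
  have h12 : u1 ≠ u2 := hu.ne'
  have hm2 : 2 ≤ G s(u1, u2) := by
    rcases hmax.1 with h | h
    · exact h
    · exact absurd (Sym2.mk_isDiag_iff.mp h.1) h12
  have hxyne : x ≠ y := by
    rintro rfl
    have := hlf x; omega
  set G' := swapped G u1 u2 x y with hG'
  have hstep : AdmissibleStep G G' :=
    ⟨u1, u2, x, y, ⟨Ne.symm hx1, Ne.symm hy1, Ne.symm hx2, Ne.symm hy2⟩,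
      by omega, hxy, Or.inr (Or.inr (Or.inl hm2)), rfl⟩
  have ne1 : (s(u1,u2) : Sym2 V) ≠ s(x,y) := by
    intro h; rw [Sym2.eq_iff] at h
    rcases h with ⟨h, _⟩ | ⟨h, _⟩
    exacts [hx1 h.symm, hy1 h.symm]
  have ne2 : (s(u1,u2) : Sym2 V) ≠ s(u2,x) := by
    intro h; rw [Sym2.eq_iff] at h
    rcases h with ⟨h, _⟩ | ⟨h, _⟩
    exacts [h12 h, hx1 h.symm]
  have ne3 : (s(u1,u2) : Sym2 V) ≠ s(y,u1) := by
    intro h; rw [Sym2.eq_iff] at h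
    rcases h with ⟨h, _⟩ | ⟨_, h⟩
    exacts [hy1 h.symm, hy2 h.symm]
  have ne4 : (s(u2,x) : Sym2 V) ≠ s(y,u1) := by
    intro h; rw [Sym2.eq_iff] at h
    rcases h with ⟨h, _⟩ | ⟨h, _⟩
    exacts [hy2 h.symm, h12 h.symm]
  have ne5 : (s(u2,x) : Sym2 V) ≠ s(x,y) := by
    intro h; rw [Sym2.eq_iff] at h
    rcases h with ⟨h, _⟩ | ⟨h, _⟩
    exacts [hx2 h.symm, hy2 h.symm]
  have ne6 : (s(y,u1) : Sym2 V) ≠ s(x,y) := by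
    intro h; rw [Sym2.eq_iff] at h
    rcases h with ⟨_, h⟩ | ⟨_, h⟩
    exacts [hy1 h.symm, hx1 h.symm]
  have hv1 : G' s(u1,u2) = G s(u1,u2) - 1 := by
    simp [hG', swapped, ne1, ne2, ne3]
  have hv3 : G' s(u2,x) = G s(u2,x) + 1 := by
    simp [hG', swapped, Ne.symm ne2, ne5, ne4]
  have hv4 : G' s(y,u1) = G s(u1,y) + 1 := by
    have hs : (s(y,u1) : Sym2 V) = s(u1,y) := Sym2.eq_swap
    have h' : G' s(y,u1) = G s(y,u1) + 1 := by
      simp only [hG', swapped]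
      rw [if_neg (Ne.symm ne3), if_neg ne6, if_neg (Ne.symm ne4)]
      simp
    rw [h', hs]
  have hother : ∀ q : Sym2 V, q ≠ s(u2,x) → q ≠ s(y,u1) → G' q ≤ G q := by
    intro q h3 h4
    simp only [hG', swapped, if_neg h3, if_neg h4, add_zero]
    exact le_trans (Nat.sub_le _ _) (Nat.sub_le _ _)
  have hS1 : ∀ q : Sym2 V, NonSimpleAt G' q → PairLE q s(u1,u2) := by
    intro q hq
    by_cases h3 : q = s(u2,x)
    · subst h3
      have h1 : 1 ≤ G s(u2,x) := by
        rcases hq with h | h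
        · rw [hv3] at h; omega
        · exact absurd (Sym2.mk_isDiag_iff.mp h.1) (Ne.symm hx2)
      rcases hX with hlt | h0
      · refine Or.inr (Or.inl ?_)
        rw [pmax_mk, pmax_mk, max_eq_left hu.le]
        exact max_lt hu hlt
      · omega
    · by_cases h4 : q = s(y,u1)
      · subst h4
        have h1 : 1 ≤ G s(u1,y) := by
          rcases hq with h | h
          · rw [hv4] at h; omega
          · exact absurd (Sym2.mk_isDiag_iff.mp h.1) hy1
        rcases hY with hlt | h0
        · refine Or.inr (Or.inr ⟨?_, ?_⟩)
          · rw [pmax_mk, pmax_mk, max_eq_left hu.le, max_eq_right (le_of_lt (hlt.trans hu))]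
          · rw [pmin_mk, pmin_mk, min_eq_right hu.le, min_eq_left (le_of_lt (hlt.trans hu))]
            exact hlt
        · omega
      · have hle := hother q h3 h4
        apply hmax.2
        rcases hq with h | h
        · exact Or.inl (by omega)
        · exact Or.inr ⟨h.1, by omega⟩
  apply hmin G' (Relation.ReflTransGen.single hstep)
  refine ⟨s(u1,u2), hmax, ?_⟩
  by_cases hns : NonSimpleAt G' (s(u1,u2))
  · exact Or.inr ⟨⟨hns, hS1⟩, by rw [hv1]; omega⟩
  · refine Or.inl fun q hq => ?_
    rcases hS1 q hq with rfl | h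
    · exact absurd hq hns
    · exact h

lemma sum_three_eval [Fintype V] [DecidableEq V] (w1 w2 : V) (k1 k2 : ℕ)
    (P : V → Prop) [DecidablePred P] :
    ∑ u : V, ((if u = w1 then k1 else 0) + (if u = w2 then k2 else 0) +
        (if P u then 1 else 0))
      = k1 + k2 + (Finset.univ.filter P).card := by
  rw [Finset.sum_add_distrib, Finset.sum_add_distrib,
    Finset.sum_ite_eq' Finset.univ w1 (fun _ => k1),
    Finset.sum_ite_eq' Finset.univ w2 (fun _ => k2), Finset.card_filter]
  simp


/-- Lemma 7: a small vertex not adjacent to any small vertex is smaller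
than u2. -/
theorem isolated_small_vertex_below_u2 [Fintype V] [LinearOrder V]
    (G : Multigraph V) (hlf : LoopFree G)
    (hord : ∀ u v : V, mdeg G u < mdeg G v → u < v)
    (hmin : ∀ G' : Multigraph V, Relation.ReflTransGen AdmissibleStep G G' → ¬ GraphLT G' G)
    (u1 u2 : V) (hmax : MaxNonSimple G s(u1, u2)) (hu : u2 < u1)
    (a : V) (hau1 : a ≠ u1) (hau2 : a ≠ u2) (hasmall : a < u1)
    (hiso : ∀ b : V, b ≠ u1 → b ≠ u2 → b < u1 → G s(a, b) = 0) :
    a < u2 := by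
  by_contra hlt
  have hu2a : u2 < a := lt_of_le_of_ne (not_lt.mp hlt) (Ne.symm hau2)
  have h12 : u1 ≠ u2 := hu.ne'
  have hm2 : 2 ≤ G s(u1, u2) := by
    rcases hmax.1 with h | h
    · exact h
    · exact absurd (Sym2.mk_isDiag_iff.mp h.1) h12
  have hdmono : ∀ z w : V, z ≤ w → mdeg G z ≤ mdeg G w := fun z w h =>
    le_of_not_gt fun hc => absurd (hord _ _ hc) (not_lt.mpr h)
  -- F1a : any pair with a big endpoint is simple
  have F1a : ∀ z w : V, u1 < w → G s(z, w) ≤ 1 := by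
    intro z w hw
    by_contra hcon
    push_neg at hcon
    have h : PairLE s(z,w) s(u1,u2) := hmax.2 _ (Or.inl hcon)
    rcases h with heq | h
    · rw [Sym2.eq_iff] at heq
      rcases heq with ⟨_, rfl⟩ | ⟨_, rfl⟩
      · exact absurd (hw.trans hu) (lt_irrefl _)
      · exact absurd hw (lt_irrefl _)
    · rcases (h : _ ∨ _) with h | ⟨h, _⟩
      · rw [pmax_mk, pmax_mk, max_eq_left hu.le] at h
        exact absurd ((le_max_right z w).trans_lt h) (not_lt.mpr hw.le)
      · rw [pmax_mk, pmax_mk, max_eq_left hu.le] at h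
        exact absurd (h ▸ le_max_right z w) (not_le.mpr hw)
  have F1b : G s(a, u1) ≤ 1 := by
    by_contra hcon
    push_neg at hcon
    have h : PairLE s(a,u1) s(u1,u2) := hmax.2 _ (Or.inl hcon)
    rcases h with heq | h
    · rw [Sym2.eq_iff] at heq
      rcases heq with ⟨rfl, _⟩ | ⟨rfl, _⟩
      · exact absurd rfl hau1
      · exact absurd rfl hau2
    · rcases (h : _ ∨ _) with h | ⟨_, h⟩
      · rw [pmax_mk, pmax_mk, max_eq_left hu.le, max_eq_right hasmall.le] at h
        exact absurd h (lt_irrefl u1)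
      · rw [pmin_mk, pmin_mk, min_eq_right hu.le, min_eq_left hasmall.le] at h
        exact absurd h (not_lt.mpr hu2a.le)
  -- C1 : upper bound for mdeg a
  have C1 : mdeg G a ≤ 1 + G s(a, u2) +
      (Finset.univ.filter (fun v => u1 < v ∧ 1 ≤ G s(a, v))).card := by
    have hb : ∀ u : V, G s(a, u) ≤ (if u = u1 then 1 else 0) +
        (if u = u2 then G s(a, u2) else 0) +
        (if u1 < u ∧ 1 ≤ G s(a, u) then 1 else 0) := by
      intro u
      rcases lt_trichotomy u u1 with h | h | h
      · by_cases h2 : u = u2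
        · rw [h2, if_neg hu.ne, if_pos rfl,
            if_neg (fun hc : u1 < u2 ∧ _ => absurd hc.1 (not_lt.mpr hu.le))]
          omega
        · rw [hiso u (ne_of_lt h) h2 h]
          exact Nat.zero_le _
      · subst h
        rw [if_pos rfl, if_neg h12,
          if_neg (fun hc : u < u ∧ _ => lt_irrefl _ hc.1)]
        have := F1b
        omega
      · have hcu : G s(a, u) ≤ 1 := F1a a u h
        rw [if_neg (ne_of_gt h), if_neg (ne_of_gt (hu.trans h))]
        by_cases h5 : 1 ≤ G s(a, u)
        · rw [if_pos ⟨h, h5⟩]; omega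
        · rw [if_neg (fun hc => h5 hc.2)]; omega
    calc mdeg G a = (∑ u : V, G s(a, u)) + G s(a, a) := rfl
      _ = ∑ u : V, G s(a, u) := by rw [hlf a, add_zero]
      _ ≤ ∑ u : V, ((if u = u1 then 1 else 0) + (if u = u2 then G s(a, u2) else 0) +
          (if u1 < u ∧ 1 ≤ G s(a, u) then 1 else 0)) :=
        Finset.sum_le_sum (fun u _ => hb u)
      _ = _ := sum_three_eval u1 u2 1 (G s(a, u2)) _
  -- C2 : lower bound for mdeg u2
  have C2 : G s(u1, u2) + G s(a, u2) +
      (Finset.univ.filter (fun v => u1 < v ∧ 1 ≤ G s(u2, v))).card ≤ mdeg G u2 := by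
    have hb : ∀ u : V, (if u = u1 then G s(u1, u2) else 0) +
        (if u = a then G s(a, u2) else 0) +
        (if u1 < u ∧ 1 ≤ G s(u2, u) then 1 else 0) ≤ G s(u2, u) := by
      intro u
      by_cases h1 : u = u1
      · subst h1
        rw [if_pos rfl, if_neg (Ne.symm hau1),
          if_neg (fun hc : u < u ∧ _ => lt_irrefl _ hc.1),
          show (s(u2, u) : Sym2 V) = s(u, u2) from Sym2.eq_swap]
        omega
      · by_cases h2 : u = a
        · subst h2
          rw [if_neg hau1, if_pos rfl,
            if_neg (fun hc : u1 < u ∧ _ => absurd hc.1 (not_lt.mpr hasmall.le)),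
            show (s(u2, u) : Sym2 V) = s(u, u2) from Sym2.eq_swap]
          omega
        · rw [if_neg h1, if_neg h2]
          by_cases hc : u1 < u ∧ 1 ≤ G s(u2, u)
          · rw [if_pos hc]; have := hc.2; omega
          · rw [if_neg hc]; omega
    calc G s(u1, u2) + G s(a, u2) +
        (Finset.univ.filter (fun v => u1 < v ∧ 1 ≤ G s(u2, v))).card
        = ∑ u : V, ((if u = u1 then G s(u1, u2) else 0) +
          (if u = a then G s(a, u2) else 0) +
          (if u1 < u ∧ 1 ≤ G s(u2, u) then 1 else 0)) :=
        (sum_three_eval u1 a (G s(u1, u2)) (G s(a, u2)) _).symm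
      _ ≤ ∑ u : V, G s(u2, u) := Finset.sum_le_sum (fun u _ => hb u)
      _ ≤ mdeg G u2 := Nat.le_add_right _ _
  have hmono2 := hdmono u2 a hu2a.le
  have hcard : (Finset.univ.filter (fun v => u1 < v ∧ 1 ≤ G s(u2, v))).card
      < (Finset.univ.filter (fun v => u1 < v ∧ 1 ≤ G s(a, v))).card := by omega
  have hnsub : ¬ (Finset.univ.filter (fun v => u1 < v ∧ 1 ≤ G s(a, v)))
      ⊆ (Finset.univ.filter (fun v => u1 < v ∧ 1 ≤ G s(u2, v))) := fun hsub =>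
    absurd (Finset.card_le_card hsub) (not_le.mpr hcard)
  obtain ⟨c, hcA, hcB⟩ := Finset.not_subset.mp hnsub
  simp only [Finset.mem_filter, Finset.mem_univ, true_and] at hcA hcB
  obtain ⟨hc1, hc2⟩ := hcA
  have hc3 : G s(u2, c) = 0 := by
    by_cases h : G s(u2, c) = 0
    · exact h
    · exact absurd ⟨hc1, Nat.one_le_iff_ne_zero.mpr h⟩ hcB
  by_cases hp : G s(u1, a) = 0
  · exact key_swap G hlf hmin u1 u2 hmax hu c a hc1.ne' (hu.trans hc1).ne' hau1 hau2
      (by rw [show (s(c, a) : Sym2 V) = s(a, c) from Sym2.eq_swap]; exact hc2)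
      (Or.inr hc3) (Or.inr hp)
  · by_cases hq : G s(u1, c) = 0
    · exact key_swap G hlf hmin u1 u2 hmax hu a c hau1 hau2 hc1.ne' (hu.trans hc1).ne'
        hc2 (Or.inl hasmall) (Or.inr hq)
    · by_cases hE : ∃ e, (1 ≤ G s(c, e) ∧ e ≠ u1 ∧ e ≠ u2 ∧ e ≠ a) ∧
          (e < u2 ∨ G s(u1, e) = 0)
      · obtain ⟨e, ⟨he1, he2, he3, _⟩, hsafe⟩ := hE
        exact key_swap G hlf hmin u1 u2 hmax hu c e hc1.ne' (hu.trans hc1).ne' he2 he3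
          he1 (Or.inr hc3) hsafe
      · push_neg at hE
        -- C3 : upper bound for mdeg c
        have C3 : mdeg G c ≤ 1 + 1 +
            (Finset.univ.filter (fun e => 1 ≤ G s(c, e) ∧ e ≠ u1 ∧ e ≠ u2 ∧ e ≠ a)).card := by
          have hb : ∀ u : V, G s(c, u) ≤ (if u = u1 then 1 else 0) +
              (if u = a then 1 else 0) +
              (if 1 ≤ G s(c, u) ∧ u ≠ u1 ∧ u ≠ u2 ∧ u ≠ a then 1 else 0) := by
            intro u
            have hcu : G s(c, u) ≤ 1 := by
              rw [show (s(c, u) : Sym2 V) = s(u, c) from Sym2.eq_swap]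
              exact F1a u c hc1
            by_cases h1 : u = u1
            · subst h1
              rw [if_pos rfl, if_neg (Ne.symm hau1), if_neg (fun hc => hc.2.1 rfl)]
              omega
            · by_cases h2 : u = a
              · subst h2
                rw [if_neg hau1, if_pos rfl, if_neg (fun hc => hc.2.2.2 rfl)]
                omega
              · by_cases h4 : u = u2
                · rw [h4, show (s(c, u2) : Sym2 V) = s(u2, c) from Sym2.eq_swap, hc3]
                  exact Nat.zero_le _
                · by_cases h5 : 1 ≤ G s(c, u)
                  · rw [if_neg h1, if_neg h2, if_pos ⟨h5, h1, h4, h2⟩]; omega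
                  · omega
          calc mdeg G c = (∑ u : V, G s(c, u)) + G s(c, c) := rfl
            _ = ∑ u : V, G s(c, u) := by rw [hlf c, add_zero]
            _ ≤ ∑ u : V, ((if u = u1 then 1 else 0) + (if u = a then 1 else 0) +
                (if 1 ≤ G s(c, u) ∧ u ≠ u1 ∧ u ≠ u2 ∧ u ≠ a then 1 else 0)) :=
              Finset.sum_le_sum (fun u _ => hb u)
            _ = _ := sum_three_eval u1 a 1 1 _
        -- C4 : lower bound for mdeg u1
        have C4 : G s(u1, u2) + 1 +
            (Finset.univ.filter (fun e => 1 ≤ G s(c, e) ∧ e ≠ u1 ∧ e ≠ u2 ∧ e ≠ a)).card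
            ≤ mdeg G u1 := by
          have hb : ∀ u : V, (if u = u2 then G s(u1, u2) else 0) +
              (if u = a then 1 else 0) +
              (if 1 ≤ G s(c, u) ∧ u ≠ u1 ∧ u ≠ u2 ∧ u ≠ a then 1 else 0) ≤ G s(u1, u) := by
            intro u
            by_cases h1 : u = u2
            · subst h1
              rw [if_pos rfl, if_neg (Ne.symm hau2), if_neg (fun hc => hc.2.2.1 rfl)]
              omega
            · by_cases h2 : u = a
              · subst h2
                rw [if_neg hau2, if_pos rfl, if_neg (fun hc => hc.2.2.2 rfl)]
                have := hp
                omega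
              · rw [if_neg h1, if_neg h2]
                by_cases hD : 1 ≤ G s(c, u) ∧ u ≠ u1 ∧ u ≠ u2 ∧ u ≠ a
                · rw [if_pos hD]
                  have := (hE u hD).2
                  omega
                · rw [if_neg hD]; omega
          calc G s(u1, u2) + 1 +
              (Finset.univ.filter (fun e => 1 ≤ G s(c, e) ∧ e ≠ u1 ∧ e ≠ u2 ∧ e ≠ a)).card
              = ∑ u : V, ((if u = u2 then G s(u1, u2) else 0) + (if u = a then 1 else 0) +
                (if 1 ≤ G s(c, u) ∧ u ≠ u1 ∧ u ≠ u2 ∧ u ≠ a then 1 else 0)) :=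
              (sum_three_eval u2 a (G s(u1, u2)) 1 _).symm
            _ ≤ ∑ u : V, G s(u1, u) := Finset.sum_le_sum (fun u _ => hb u)
            _ ≤ mdeg G u1 := Nat.le_add_right _ _
        have hmono3 := hdmono u1 c hc1.le
        omega
end
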